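/- Suppose 2 ≤ s < ∞ (i.e. ξ ∈ (0,1/2] is rational). Then for all q ≥ q_{s−1} = (1/2)(log Q_{s−1} − log Δ_{s−2}), one has L_{ξ,2}(q) = q + log Δ_{s−2}; in particular L_{ξ,2} admits no local maximum on (q_{s−1}, ∞). -/
import Mathlib


open Pointwise

/-- Distance from a real number to the nearest integer. -/
noncomputable def nearestInt (ξ : ℝ) : ℝ := sInf (Set.range fun m : ℤ => |ξ - (m : ℝ)|)

/-- The convex body `C_ξ(e^q) = {(x,y) : |x| ≤ e^q, |xξ - y| ≤ e^{-q}}`. -/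
def body (ξ q : ℝ) : Set (ℝ × ℝ) :=
  {p : ℝ × ℝ | |p.1| ≤ Real.exp q ∧ |p.1 * ξ - p.2| ≤ Real.exp (-q)}

/-- The `j`-th successive minimum of `C_ξ(e^q)` with respect to the lattice `ℤ²`:
the smallest `λ ≥ 0` such that `λ • C_ξ(e^q)` contains at least `j` linearly
independent points of `ℤ²`. -/
noncomputable def lam (ξ q : ℝ) (j : ℕ) : ℝ :=
  sInf {l : ℝ | 0 ≤ l ∧ ∃ v : Fin j → ℤ × ℤ,
    LinearIndependent ℝ (fun i => ((((v i).1 : ℝ)), (((v i).2 : ℝ)))) ∧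
    ∀ i, ((((v i).1 : ℝ)), (((v i).2 : ℝ))) ∈ l • body ξ q}

/-- `L_{ξ,j}(q) = log λ_j(C_ξ(e^q))`. -/
noncomputable def LL (ξ : ℝ) (j : ℕ) (q : ℝ) : ℝ := Real.log (lam ξ q j)

/-- `L_x(q)`: the logarithm of the smallest `λ ≥ 0` with `x ∈ λ • C_ξ(e^q)`, namely
`log (max (|Q| e^{-q}) (|Qξ - P| e^q))`, which equals
`max (log |Q| - q) (log |Qξ - P| + q)` (the first term being omitted when `Q = 0`,
the second when `Qξ - P = 0`). -/
noncomputable def Lx (ξ : ℝ) (x : ℤ × ℤ) (q : ℝ) : ℝ :=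
  Real.log (max (|(x.1 : ℝ)| * Real.exp (-q)) (|(x.1 : ℝ) * ξ - (x.2 : ℝ)| * Real.exp q))

/-- Data of a real number `ξ ∈ [0,1/2]` together with its simple continued fraction
expansion `ξ = [0; a 1, a 2, …]`, with partial quotients `a n ≥ 1` for `1 ≤ n < s`,
where `s ∈ ℕ* ∪ {∞}` (encoded in `WithTop ℤ`), `a (s-1) ≥ 2` if `2 ≤ s < ∞`
(`s = 1` meaning `ξ = 0`), and with `Q`, `P` the denominators and numerators of its
convergents, given by the standard recurrences with initial values
`P (-1) = Q 0 = 1`, `P 0 = Q (-1) = 0`.  The fact that `[0; a 1, a 2, …]` is indeed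
the continued fraction expansion of `ξ` is recorded through the value conditions
`hfin` (if `s < ∞` then `ξ = P (s-1) / Q (s-1)`) and `hinf` (if `s = ∞` then
`P n / Q n → ξ`), which, given the constraints on the `a n`, characterize it. -/
structure CFData where
  ξ : ℝ
  s : WithTop ℤ
  a : ℤ → ℤ
  Q : ℤ → ℤ
  P : ℤ → ℤ
  hξ0 : 0 ≤ ξ
  hξhalf : ξ ≤ 1 / 2
  hs : 1 ≤ s
  ha : ∀ n : ℤ, 1 ≤ n → (n : WithTop ℤ) < s → 1 ≤ a n
  halast : ∀ n : ℤ, 2 ≤ n → (n : WithTop ℤ) = s → 2 ≤ a (n - 1)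
  hQ0 : Q 0 = 1
  hQneg : Q (-1) = 0
  hP0 : P 0 = 0
  hPneg : P (-1) = 1
  hQrec : ∀ n : ℤ, 1 ≤ n → (n : WithTop ℤ) < s → Q n = Q (n - 2) + a n * Q (n - 1)
  hPrec : ∀ n : ℤ, 1 ≤ n → (n : WithTop ℤ) < s → P n = P (n - 2) + a n * P (n - 1)
  hfin : ∀ k : ℤ, (k : WithTop ℤ) = s → ξ = (P (k - 1) : ℝ) / (Q (k - 1) : ℝ)
  hinf : s = ⊤ → Filter.Tendsto (fun n : ℕ => (P (n : ℤ) : ℝ) / (Q (n : ℤ) : ℝ))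
      Filter.atTop (nhds ξ)

namespace CFData

/-- `Δ n = |Q n • ξ - P n|`. -/
noncomputable def Δ (c : CFData) (n : ℤ) : ℝ := |(c.Q n : ℝ) * c.ξ - (c.P n : ℝ)|

/-- `Q (n,t) = Q (n-2) + t * Q (n-1)`. -/
def Qt (c : CFData) (n t : ℤ) : ℤ := c.Q (n - 2) + t * c.Q (n - 1)

/-- `P (n,t) = P (n-2) + t * P (n-1)`. -/
def Pt (c : CFData) (n t : ℤ) : ℤ := c.P (n - 2) + t * c.P (n - 1)

/-- `Δ (n,t) = |Q (n,t) • ξ - P (n,t)|`. -/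
noncomputable def Δt (c : CFData) (n t : ℤ) : ℝ := |(c.Qt n t : ℝ) * c.ξ - (c.Pt n t : ℝ)|

/-- `q n = (log (Q n) - log (Δ (n-1))) / 2`; in particular `q 0 = 0`. -/
noncomputable def qcrit (c : CFData) (n : ℤ) : ℝ :=
  (Real.log (c.Q n : ℝ) - Real.log (c.Δ (n - 1))) / 2

end CFData


lemma aux_Qpos (c : CFData) (k : ℤ) (hk : (k : WithTop ℤ) = c.s) :
    ∀ n : ℤ, 0 ≤ n → n ≤ k - 1 → 1 ≤ c.Q n ∧ 0 ≤ c.Q (n - 1) ∧ c.Q (n - 1) ≤ c.Q n := by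
  refine Int.le_induction ?_ ?_
  · intro _
    norm_num [c.hQ0, c.hQneg]
  · intro n hn ih
    intro h
    obtain ⟨h1, h2, h3⟩ := ih (by omega)
    have hlt : ((n + 1 : ℤ) : WithTop ℤ) < c.s := by
      rw [← hk]; exact_mod_cast (by omega : n + 1 < k)
    have hrec := c.hQrec (n + 1) (by omega) hlt
    have ha := c.ha (n + 1) (by omega) hlt
    have e1 : n + 1 - 2 = n - 1 := by ring
    have e2 : n + 1 - 1 = n := by ring
    rw [e1, e2] at hrec
    rw [e2]
    refine ⟨?_, ?_, ?_⟩ <;> nlinarith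

lemma aux_det (c : CFData) (k : ℤ) (hk : (k : WithTop ℤ) = c.s) :
    ∀ n : ℤ, 0 ≤ n → n ≤ k - 1 →
      c.Q (n - 1) * c.P n - c.Q n * c.P (n - 1) = 1 ∨
      c.Q (n - 1) * c.P n - c.Q n * c.P (n - 1) = -1 := by
  refine Int.le_induction ?_ ?_
  · intro _
    norm_num [c.hQ0, c.hQneg, c.hP0, c.hPneg]
  · intro n hn ih
    intro h
    have hlt : ((n + 1 : ℤ) : WithTop ℤ) < c.s := by
      rw [← hk]; exact_mod_cast (by omega : n + 1 < k)
    have hq := c.hQrec (n + 1) (by omega) hlt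
    have hp := c.hPrec (n + 1) (by omega) hlt
    have e1 : n + 1 - 2 = n - 1 := by ring
    have e2 : n + 1 - 1 = n := by ring
    rw [e1, e2] at hq hp
    rw [e2, hq, hp]
    rcases ih (by omega) with h' | h'
    · right; linear_combination -h'
    · left; linear_combination -h'

lemma mem_smul_body {l x y ξ q : ℝ} (hl : 0 < l) (h1 : |x| ≤ l * Real.exp q)
    (h2 : |x * ξ - y| ≤ l * Real.exp (-q)) : (x, y) ∈ l • body ξ q := by
  rw [Set.mem_smul_set]
  refine ⟨(x / l, y / l), ⟨?_, ?_⟩, ?_⟩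
  · show |x / l| ≤ Real.exp q
    rw [abs_div, abs_of_pos hl, div_le_iff₀ hl]
    linarith
  · show |x / l * ξ - y / l| ≤ Real.exp (-q)
    have e : x / l * ξ - y / l = (x * ξ - y) / l := by ring
    rw [e, abs_div, abs_of_pos hl, div_le_iff₀ hl]
    linarith
  · have hl' := hl.ne'
    show (l * (x / l), l * (y / l)) = (x, y)
    field_simp

lemma of_mem_smul_body {l x y ξ q : ℝ} (hl : 0 ≤ l) (h : (x, y) ∈ l • body ξ q) :
    |x| ≤ l * Real.exp q ∧ |x * ξ - y| ≤ l * Real.exp (-q) := by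
  rw [Set.mem_smul_set] at h
  obtain ⟨⟨a, b⟩, ⟨hb1, hb2⟩, he⟩ := h
  have hx : x = l * a := by
    have := congrArg Prod.fst he; simpa using this.symm
  have hy : y = l * b := by
    have := congrArg Prod.snd he; simpa using this.symm
  subst hx; subst hy
  constructor
  · rw [abs_mul, abs_of_nonneg hl]
    exact mul_le_mul_of_nonneg_left hb1 hl
  · have e : l * a * ξ - l * b = l * (a * ξ - b) := by ring
    rw [e, abs_mul, abs_of_nonneg hl]
    exact mul_le_mul_of_nonneg_left hb2 hl

theorem stmt17 (c : CFData) (k : ℤ) (hk : (k : WithTop ℤ) = c.s) (hk2 : 2 ≤ k)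
    (hξpos : 0 < c.ξ) :
    (∀ q : ℝ, c.qcrit (k - 1) ≤ q → LL c.ξ 2 q = q + Real.log (c.Δ (k - 2))) ∧
    (∀ x : ℝ, x ∈ Set.Ioi (c.qcrit (k - 1)) →
      ¬ IsLocalMaxOn (LL c.ξ 2) (Set.Ioi (c.qcrit (k - 1))) x) := by
  -- basic facts
  have hQk1 := aux_Qpos c k hk (k - 1) (by omega) le_rfl
  have hQk2 := aux_Qpos c k hk (k - 2) (by omega) (by omega)
  have ek : k - 1 - 1 = k - 2 := by ring
  rw [ek] at hQk1
  have hqd1 : (1 : ℝ) ≤ (c.Q (k - 1) : ℝ) := by exact_mod_cast hQk1.1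
  have hqdpos : (0 : ℝ) < (c.Q (k - 1) : ℝ) := by linarith
  have hQk2le : (c.Q (k - 2) : ℝ) ≤ (c.Q (k - 1) : ℝ) := by exact_mod_cast hQk1.2.2
  have hQk2pos : (1 : ℝ) ≤ (c.Q (k - 2) : ℝ) := by exact_mod_cast hQk2.1
  have hξeq : c.ξ = (c.P (k - 1) : ℝ) / (c.Q (k - 1) : ℝ) := c.hfin k hk
  have hxi : (c.Q (k - 1) : ℝ) * c.ξ = (c.P (k - 1) : ℝ) := by
    rw [hξeq]; field_simp
  have hdet := aux_det c k hk (k - 1) (by omega) le_rfl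
  rw [ek] at hdet
  -- Δ (k-2) = 1 / Q (k-1)
  have hΔrepr : (c.Q (k - 2) : ℝ) * c.ξ - (c.P (k - 2) : ℝ) =
      ((c.Q (k - 2) * c.P (k - 1) - c.Q (k - 1) * c.P (k - 2) : ℤ) : ℝ) / (c.Q (k - 1) : ℝ) := by
    rw [hξeq]; push_cast; field_simp
  have hΔ : c.Δ (k - 2) = 1 / (c.Q (k - 1) : ℝ) := by
    have e0 : c.Δ (k - 2) =
        |((c.Q (k - 2) * c.P (k - 1) - c.Q (k - 1) * c.P (k - 2) : ℤ) : ℝ)| / (c.Q (k - 1) : ℝ) := by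
      rw [CFData.Δ, hΔrepr, abs_div, abs_of_pos hqdpos]
    rw [e0]
    rcases hdet with h' | h' <;> rw [h'] <;> norm_num
  have hΔpos : 0 < c.Δ (k - 2) := by rw [hΔ]; positivity
  have hΔne : c.Δ (k - 2) ≠ 0 := hΔpos.ne'
  -- the main evaluation of lam
  have key : ∀ q : ℝ, c.qcrit (k - 1) ≤ q → lam c.ξ q 2 = c.Δ (k - 2) * Real.exp q := by
    intro q hq
    have hqcrit : c.qcrit (k - 1) =
        (Real.log (c.Q (k - 1) : ℝ) - Real.log (c.Δ (k - 2))) / 2 := by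
      unfold CFData.qcrit
      rw [ek]
    have hQle : (c.Q (k - 1) : ℝ) ≤ c.Δ (k - 2) * Real.exp (2 * q) := by
      have h2q : Real.log (c.Q (k - 1) : ℝ) ≤ Real.log (c.Δ (k - 2)) + 2 * q := by
        rw [hqcrit] at hq; linarith
      have := Real.exp_le_exp.mpr h2q
      rwa [Real.exp_log hqdpos, Real.exp_add, Real.exp_log hΔpos] at this
    set l := c.Δ (k - 2) * Real.exp q with hl
    have hlpos : 0 < l := by positivity
    have hle2 : l * Real.exp q = c.Δ (k - 2) * Real.exp (2 * q) := by
      rw [hl, mul_assoc, ← Real.exp_add, two_mul]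
    have hle3 : l * Real.exp (-q) = c.Δ (k - 2) := by
      rw [hl, mul_assoc, ← Real.exp_add]
      simp
    -- membership
    have hmem : l ∈ {l : ℝ | 0 ≤ l ∧ ∃ v : Fin 2 → ℤ × ℤ,
        LinearIndependent ℝ (fun i => ((((v i).1 : ℝ)), (((v i).2 : ℝ)))) ∧
        ∀ i, ((((v i).1 : ℝ)), (((v i).2 : ℝ))) ∈ l • body c.ξ q} := by
      refine ⟨hlpos.le, ![(c.Q (k - 1), c.P (k - 1)), (c.Q (k - 2), c.P (k - 2))], ?_, ?_⟩
      · rw [Fintype.linearIndependent_iff]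
        intro g hg
        have h0 := congrArg Prod.fst hg
        have h1 := congrArg Prod.snd hg
        simp [Fin.sum_univ_two, Prod.smul_mk] at h0 h1
        have hg0 : g 0 = 0 := by
          rcases hdet with h' | h'
          · have h'' : (c.Q (k - 2) : ℝ) * (c.P (k - 1) : ℝ) -
                (c.Q (k - 1) : ℝ) * (c.P (k - 2) : ℝ) = 1 := by exact_mod_cast h'
            linear_combination (-(c.P (k - 2) : ℝ)) * h0 + (c.Q (k - 2) : ℝ) * h1 - g 0 * h''
          · have h'' : (c.Q (k - 2) : ℝ) * (c.P (k - 1) : ℝ) -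
                (c.Q (k - 1) : ℝ) * (c.P (k - 2) : ℝ) = -1 := by exact_mod_cast h'
            linear_combination (c.P (k - 2) : ℝ) * h0 - (c.Q (k - 2) : ℝ) * h1 + g 0 * h''
        have hg1 : g 1 = 0 := by
          rcases hdet with h' | h'
          · have h'' : (c.Q (k - 2) : ℝ) * (c.P (k - 1) : ℝ) -
                (c.Q (k - 1) : ℝ) * (c.P (k - 2) : ℝ) = 1 := by exact_mod_cast h'
            linear_combination (c.P (k - 1) : ℝ) * h0 - (c.Q (k - 1) : ℝ) * h1 - g 1 * h''
          · have h'' : (c.Q (k - 2) : ℝ) * (c.P (k - 1) : ℝ) -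
                (c.Q (k - 1) : ℝ) * (c.P (k - 2) : ℝ) = -1 := by exact_mod_cast h'
            linear_combination (-(c.P (k - 1) : ℝ)) * h0 + (c.Q (k - 1) : ℝ) * h1 + g 1 * h''
        intro i
        fin_cases i
        · exact hg0
        · exact hg1
      · intro i
        fin_cases i
        · show ((c.Q (k - 1) : ℝ), (c.P (k - 1) : ℝ)) ∈ l • body c.ξ q
          apply mem_smul_body hlpos
          · rw [hle2, abs_of_pos hqdpos]; exact hQle
          · rw [hxi, sub_self, abs_zero]; positivity
        · show ((c.Q (k - 2) : ℝ), (c.P (k - 2) : ℝ)) ∈ l • body c.ξ q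
          apply mem_smul_body hlpos
          · rw [hle2, abs_of_nonneg (by linarith : (0:ℝ) ≤ (c.Q (k - 2) : ℝ))]
            linarith
          · rw [hle3]
            exact le_of_eq rfl
    -- lower bound
    have hlb : ∀ m ∈ {l : ℝ | 0 ≤ l ∧ ∃ v : Fin 2 → ℤ × ℤ,
        LinearIndependent ℝ (fun i => ((((v i).1 : ℝ)), (((v i).2 : ℝ)))) ∧
        ∀ i, ((((v i).1 : ℝ)), (((v i).2 : ℝ))) ∈ m • body c.ξ q}, l ≤ m := by
      rintro m ⟨hm0, v, hind, hv⟩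
      by_contra hcon
      push_neg at hcon
      have hsm : m * Real.exp (-q) < c.Δ (k - 2) := by
        rw [← hle3]
        exact mul_lt_mul_of_pos_right hcon (Real.exp_pos _)
      have honline : ∀ i, ((v i).1 : ℝ) * c.ξ = ((v i).2 : ℝ) := by
        intro i
        have h2 := (of_mem_smul_body hm0 (hv i)).2
        have hlt : |((v i).1 : ℝ) * c.ξ - ((v i).2 : ℝ)| < 1 / (c.Q (k - 1) : ℝ) := by
          rw [← hΔ]; exact lt_of_le_of_lt h2 hsm
        have hrepr : ((v i).1 : ℝ) * c.ξ - ((v i).2 : ℝ) =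
            (((v i).1 * c.P (k - 1) - (v i).2 * c.Q (k - 1) : ℤ) : ℝ) / (c.Q (k - 1) : ℝ) := by
          rw [hξeq]; push_cast; field_simp
        rw [hrepr, abs_div, abs_of_pos hqdpos, div_lt_div_iff₀ hqdpos hqdpos, one_mul] at hlt
        have habs : |(((v i).1 * c.P (k - 1) - (v i).2 * c.Q (k - 1) : ℤ) : ℝ)| < 1 :=
          lt_of_mul_lt_mul_right (by linarith : |(((v i).1 * c.P (k - 1) - (v i).2 * c.Q (k - 1) : ℤ) : ℝ)| * (c.Q (k - 1) : ℝ) < 1 * (c.Q (k - 1) : ℝ)) hqdpos.le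
        have hint : |((v i).1 * c.P (k - 1) - (v i).2 * c.Q (k - 1) : ℤ)| < 1 := by
          exact_mod_cast habs
        have hz : (v i).1 * c.P (k - 1) - (v i).2 * c.Q (k - 1) = 0 := by
          have := abs_lt.mp hint
          omega
        have hz0 : ((v i).1 : ℝ) * c.ξ - ((v i).2 : ℝ) = 0 := by
          rw [hrepr, hz]; simp
        linarith
      have hli := Fintype.linearIndependent_iff.mp hind
      have hrel : (Finset.univ : Finset (Fin 2)).sum
          (fun i => (![((v 1).1 : ℝ), -((v 0).1 : ℝ)] i) • ((((v i).1 : ℝ)), (((v i).2 : ℝ)))) = 0 := by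
        rw [Fin.sum_univ_two]
        simp only [Matrix.cons_val_zero, Matrix.cons_val_one, Matrix.head_cons, Prod.smul_mk,
          smul_eq_mul]
        rw [← honline 0, ← honline 1]
        refine Prod.ext ?_ ?_ <;> simp <;> ring
      have hb0 : ((v 1).1 : ℝ) = 0 := by
        have := hli ![((v 1).1 : ℝ), -((v 0).1 : ℝ)] hrel 0
        simpa using this
      have hne := hind.ne_zero 1
      apply hne
      have h2 := honline 1
      refine Prod.ext ?_ ?_
      · exact hb0
      · show ((v 1).2 : ℝ) = 0
        rw [← h2, hb0, zero_mul]
    unfold lam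
    exact le_antisymm (csInf_le ⟨l, fun m hm => hlb m hm⟩ hmem) (le_csInf ⟨l, hmem⟩ hlb)
  constructor
  · intro q hq
    rw [LL, key q hq, Real.log_mul hΔne (Real.exp_ne_zero q), Real.log_exp]
    ring
  · intro x hx h
    have hx' : c.qcrit (k - 1) < x := hx
    have he2 : ∀ᶠ y in nhdsWithin x (Set.Ioi (c.qcrit (k - 1))), LL c.ξ 2 y ≤ LL c.ξ 2 x := h
    have hEq : ∀ᶠ y in nhdsWithin x (Set.Ioi (c.qcrit (k - 1))), y ≤ x := by
      filter_upwards [he2, eventually_mem_nhdsWithin] with y hy hy'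
      have e1 : LL c.ξ 2 y = y + Real.log (c.Δ (k - 2)) := by
        rw [LL, key y (le_of_lt hy'), Real.log_mul hΔne (Real.exp_ne_zero y), Real.log_exp]; ring
      have e2 : LL c.ξ 2 x = x + Real.log (c.Δ (k - 2)) := by
        rw [LL, key x (le_of_lt hx'), Real.log_mul hΔne (Real.exp_ne_zero x), Real.log_exp]; ring
      rw [e1, e2] at hy
      linarith
    rw [nhdsWithin_eq_nhds.mpr (isOpen_Ioi.mem_nhds hx')] at hEq
    have hEq' : ∀ᶠ y in nhdsWithin x (Set.Ioi x), y ≤ x :=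
      hEq.filter_mono nhdsWithin_le_nhds
    have hgt : ∀ᶠ y in nhdsWithin x (Set.Ioi x), x < y := eventually_mem_nhdsWithin
    obtain ⟨y, h1, h2⟩ := (hEq'.and hgt).exists
    linarith
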